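/- Let V₁ = {(1,3),(1,5)}, E_{5,L} = {(1,3),(3,6)}, and E_{5,R} = {(2,6),(3,6)} (all admissible Wilson loop diagrams with 2 propagators on 6 vertices). Then the three boundary positroids B(∂_{(1,5),5}V₁) (vertex-removal boundary of V₁ setting the entry of propagator (1,5) at column 5 to zero), B(∂_{(1,3),3}E_{5,L}) (collision boundary of E_{5,L} on edge 3, imposing c_{(1,3),3}c_{(3,6),4} − c_{(3,6),3}c_{(1,3),4} = 0), and B(∂_{(2,6),3}E_{5,R}) (vertex-removal boundary of E_{5,R} setting the entry of propagator (2,6) at column 3 to zero) are all equal; moreover this common positroid is contained in B(V₁) and in B(E_{5,L}) = B(E_{5,R}), and is maximal among positroids properly contained in each. Hence Σ(V₁) and Σ(E₅) share a codimension-one boundary cell. -/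

import Mathlib

/-! Core combinatorial definitions for Wilson loop diagrams with 2 propagators on 6 vertices.
Vertices and edges of the hexagon are labelled by `Fin 6` (cyclically; edge `i` joins
vertices `i` and `i+1`). -/

namespace WLD

/-- Vertices / edges of the hexagon. -/
abbrev V : Type := Fin 6

/-- The support of a propagator `p = {i, j}` (a pair of edges): `{i, i+1, j, j+1}`. -/
def supp (p : Finset V) : Finset V := p ∪ p.image (· + 1)

/-- Two propagators cross iff their edge pairs interleave in the cyclic order. -/
def Crossing (p q : Finset V) : Prop :=
  ∃ a b c d : V, a < b ∧ b < c ∧ c < d ∧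
    ((p = {a, c} ∧ q = {b, d}) ∨ (p = {b, d} ∧ q = {a, c}))

/-- A Wilson loop diagram with 2 propagators on 6 vertices: a set of two distinct
propagators, each of which is a pair of distinct edges. -/
def IsWLD (P : Finset (Finset V)) : Prop :=
  P.card = 2 ∧ ∀ p ∈ P, p.card = 2

/-- Admissibility: `|V_Q| ≥ |Q| + 3` for every nonempty subset of propagators, and
no two propagators cross. -/
def Admissible (P : Finset (Finset V)) : Prop :=
  IsWLD P ∧
  (∀ Q ⊆ P, Q.Nonempty → Q.card + 3 ≤ (Q.biUnion supp).card) ∧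
  (∀ p ∈ P, ∀ q ∈ P, ¬ Crossing p q)

/-- The matrix `C(W)` associated to the (ordered) pair of propagators `(p, q)`,
with real parameters `c` in the support entries and `0` elsewhere. -/
def Cmat (p q : Finset V) (c : Fin 2 → V → ℝ) : Matrix (Fin 2) V ℝ :=
  Matrix.of fun b a => if a ∈ supp (if b = 0 then p else q) then c b a else 0

/-- The `2×2` minor of a `2×6` matrix on columns `a`, `b`. -/
def mnr (M : Matrix (Fin 2) V ℝ) (a b : V) : ℝ := M 0 a * M 1 b - M 0 b * M 1 a

/-- The positroid `B(W)` of a Wilson loop diagram: the 2-element column sets on which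
the minor of `C(W)` is not identically zero (i.e. nonzero for some parameter values). -/
def BW (P : Finset (Finset V)) : Set (Finset V) :=
  { I | ∃ p ∈ P, ∃ q ∈ P, p ≠ q ∧ ∃ a b : V, a < b ∧ I = {a, b} ∧
        ∃ c : Fin 2 → V → ℝ, mnr (Cmat p q c) a b ≠ 0 }

/-- `M` is totally nonnegative (all `2×2` minors, in the column order, nonnegative). -/
def TNN (M : Matrix (Fin 2) V ℝ) : Prop := ∀ a b : V, a < b → 0 ≤ mnr M a b

/-- The set of nonvanishing maximal minors of `M` is exactly `B`. -/
def IsRep (B : Set (Finset V)) (M : Matrix (Fin 2) V ℝ) : Prop :=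
  ∀ a b : V, a < b → (mnr M a b ≠ 0 ↔ ({a, b} : Finset V) ∈ B)

/-- A positroid of rank 2 on the 6 columns: a nonempty collection of 2-element subsets
realizable as the set of nonvanishing maximal minors of a rank-2 totally nonnegative
real `2×6` matrix. -/
def IsPositroid (B : Set (Finset V)) : Prop :=
  B.Nonempty ∧ (∀ I ∈ B, I.card = 2) ∧
  ∃ M : Matrix (Fin 2) V ℝ, M.rank = 2 ∧ TNN M ∧ IsRep B M

/-- `B` is maximal among positroids properly contained in `B₀`. -/
def MaxProperSub (B B₀ : Set (Finset V)) : Prop :=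
  IsPositroid B ∧ B ⊂ B₀ ∧
  ∀ B' : Set (Finset V), IsPositroid B' → B' ⊂ B₀ → B ⊆ B' → B' = B

/-! ### Boundaries of Wilson loop diagrams -/

/-- The smaller endpoint (edge) of a propagator. -/
def e1 (p : Finset V) : V := p.min.untopD 0
/-- The larger endpoint (edge) of a propagator. -/
def e2 (p : Finset V) : V := p.max.unbotD 0

/-- The edge of `p` on which the support vertex `v` lies. -/
def edgeOf (p : Finset V) (v : V) : V :=
  if v = e1 p ∨ v = e1 p + 1 then e1 p else e2 p

/-- The endpoint of `p` other than `e`. -/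
def oth (p : Finset V) (e : V) : V := if e1 p = e then e2 p else e1 p

/-- `p` is attached nearer to vertex `e` than `q` on the shared edge `e`
(in the non-crossing arrangement this means the other endpoint of `p` is
counterclockwise-further from `e`). -/
def NearerE (p q : Finset V) (e : V) : Prop :=
  (oth q e - e).val < (oth p e - e).val

instance (p q : Finset V) (e : V) : Decidable (NearerE p q e) :=
  inferInstanceAs (Decidable (_ < _))

/-- The boundary move of `p` away from `v` collides with the other propagator `q`
(both end on the edge of `p` containing `v`, and `q`'s endpoint is in the way). -/
def IsCollision (p q : Finset V) (v : V) : Prop :=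
  edgeOf p v ∈ q ∧
    ((v = edgeOf p v ∧ NearerE p q (edgeOf p v)) ∨
     (v = edgeOf p v + 1 ∧ NearerE q p (edgeOf p v)))

instance (p q : Finset V) (v : V) : Decidable (IsCollision p q v) :=
  inferInstanceAs (Decidable (_ ∧ _))

/-- The other propagator of a two-propagator diagram. -/
noncomputable def otherProp (P : Finset (Finset V)) (p : Finset V) : Finset V :=
  if h : ∃ q, q ∈ P ∧ q ≠ p then h.choose else ∅

/-- The boundary `∂_{p,v}` of the diagram `{p, q}` is degenerate: this happens in the
vertex-removal case when the resulting diagram violates the support inequality. -/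
def DegenerateB (p q : Finset V) (v : V) : Prop :=
  ¬ IsCollision p q v ∧ (((supp p).erase v) ∪ supp q).card < 5

/-- Degeneracy of the boundary `∂_{p,v}` of the diagram `P`. -/
def Degenerate (P : Finset (Finset V)) (p : Finset V) (v : V) : Prop :=
  DegenerateB p (otherProp P p) v

/-- The positroid of the parameter family of matrices with supports given by `(p, q)`
subject to the constraint `cond`. -/
def BofFam (p q : Finset V) (cond : (Fin 2 → V → ℝ) → Prop) : Set (Finset V) :=
  { I | ∃ a b : V, a < b ∧ I = {a, b} ∧
        ∃ c : Fin 2 → V → ℝ, cond c ∧ mnr (Cmat p q c) a b ≠ 0 }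

/-- The boundary positroid `B(∂_{p,v}W)` for the diagram `{p, q}`: in the collision
case the `2×2` minor on the columns of the shared edge is set to zero; in the
vertex-removal case the entry of `p` in column `v` is set to zero. -/
def BofBd (p q : Finset V) (v : V) : Set (Finset V) :=
  BofFam p q fun c =>
    if IsCollision p q v then mnr (Cmat p q c) (edgeOf p v) (edgeOf p v + 1) = 0
    else c 0 v = 0

/-- The boundary positroid `B(∂_{p,v}W)` of the diagram `P` at `(p, v)`. -/
noncomputable def BofB (P : Finset (Finset V)) (p : Finset V) (v : V) : Set (Finset V) :=
  BofBd p (otherProp P p) v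

end WLD


namespace WLD

/-- `V₁`: propagators `(1,3)` and `(1,5)` (labels shifted down by one: `{0,2}`, `{0,4}`). -/
def V1 : Finset (Finset V) := {{0, 2}, {0, 4}}

/-- `E_{5,L}`: propagators `(1,3)` and `(3,6)` (labels shifted down by one). -/
def E5L : Finset (Finset V) := {{0, 2}, {2, 5}}

/-- `E_{5,R}`: propagators `(2,6)` and `(3,6)` (labels shifted down by one). -/
def E5R : Finset (Finset V) := {{1, 5}, {2, 5}}

/-- Vertex-removal boundary positroid of `V₁` at the propagator `(1,5)` and column `5`
(our labels `{0,4}` and column `4`): the entry of `(1,5)` in that column is set to `0`. -/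
def BdV1 : Set (Finset V) := BofFam {0, 4} {0, 2} (fun c => c 0 4 = 0)

/-- Collision boundary positroid of `E_{5,L}` on edge `3` (our edge `2`): the relation
`c_{(1,3),3} c_{(3,6),4} - c_{(3,6),3} c_{(1,3),4} = 0` is imposed. -/
def BdE5L : Set (Finset V) := BofFam {0, 2} {2, 5} (fun c => c 0 2 * c 1 3 - c 1 2 * c 0 3 = 0)

/-- Vertex-removal boundary positroid of `E_{5,R}` at the propagator `(2,6)` and
column `3` (our labels `{1,5}` and column `2`). -/
def BdE5R : Set (Finset V) := BofFam {1, 5} {2, 5} (fun c => c 0 2 = 0)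

end WLD

/-! All six positroids are computed explicitly (labels shifted down by one): a pair lies in the
positroid of a parameter family as soon as one admissible parameter choice makes its minor
nonzero, and outside it when the constraint kills the minor identically. The three boundary
positroids are all `commonB`, while `B(V₁) = commonB ∪ {{a, 4} | a < 4}` and
`B(E₅) = commonB ∪ {{2, 3}}`. Maximality below `B(E₅)` is then automatic. Below `B(V₁)` it comes
from the three-term Plücker relation: `{4, 5} ∉ B(V₁)` forces `Δ₄₅ = 0` in any representing
matrix, so `Δ_{b4} Δ_{a5} = Δ_{b5} Δ_{a4}`, and since every `{b, 5}` with `b < 4` lies in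
`commonB`, one pair `{a, 4}` in the positroid forces all of them. -/

namespace WLD

theorem mnr_Cmat_swap (p q : Finset V) (c : Fin 2 → V → ℝ) (a b : V) :
    mnr (Cmat p q ![c 1, c 0]) a b = -mnr (Cmat q p c) a b := by
  simp only [mnr, Cmat, Matrix.of_apply, Matrix.cons_val_zero, Matrix.cons_val_one,
    one_ne_zero, if_true, if_false]
  split_ifs <;> ring

theorem BW_pair {p q : Finset V} (hpq : p ≠ q) : BW {p, q} = BofFam p q fun _ => True := by
  ext I
  constructor
  · rintro ⟨p', hp', q', hq', hne, a, b, hab, rfl, c, hc⟩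
    simp only [Finset.mem_insert, Finset.mem_singleton] at hp' hq'
    rcases hp' with rfl | rfl <;> rcases hq' with rfl | rfl
    · exact absurd rfl hne
    · exact ⟨a, b, hab, rfl, c, trivial, hc⟩
    · exact ⟨a, b, hab, rfl, ![c 1, c 0], trivial, by rwa [mnr_Cmat_swap, neg_ne_zero]⟩
    · exact absurd rfl hne
  · rintro ⟨a, b, hab, rfl, c, -, hc⟩
    exact ⟨p, by simp, q, by simp, hpq, a, b, hab, rfl, c, hc⟩

theorem BofFam_eq_coe {p q : Finset V} {cond : (Fin 2 → V → ℝ) → Prop} {S : Finset (Finset V)}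
    (hS : ∀ I ∈ S, ∃ a b : V, a < b ∧ I = {a, b})
    (c₀ : Fin 2 → V → ℝ) (hc₀ : cond c₀)
    (hc₀S : ∀ a b : V, a < b → {a, b} ∈ S → mnr (Cmat p q c₀) a b ≠ 0)
    (hvan : ∀ c, cond c → ∀ a b : V, a < b → {a, b} ∉ S → mnr (Cmat p q c) a b = 0) :
    BofFam p q cond = S := by
  ext I
  constructor
  · rintro ⟨a, b, hab, rfl, c, hc, hne⟩
    by_contra hI
    exact hne (hvan c hc a b hab hI)
  · intro hI
    obtain ⟨a, b, hab, rfl⟩ := hS I hI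
    exact ⟨a, b, hab, rfl, c₀, hc₀, hc₀S a b hab hI⟩

theorem rank_eq_two_of_mnr_ne_zero {M : Matrix (Fin 2) V ℝ} {a b : V} (h : mnr M a b ≠ 0) :
    M.rank = 2 := by
  refine le_antisymm ((M.rank_le_card_height).trans_eq (Fintype.card_fin 2)) ?_
  have hdet : (M.submatrix id ![a, b]).det ≠ 0 := by
    simpa [Matrix.det_fin_two, mnr] using h
  calc 2 = (M.submatrix id ![a, b]).rank := by
        rw [Matrix.rank_of_isUnit _ ((Matrix.isUnit_iff_isUnit_det _).mpr hdet.isUnit),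
          Fintype.card_fin]
    _ ≤ M.rank := M.rank_submatrix_le _ _

theorem mnr_ne_zero_of_pluecker (M : Matrix (Fin 2) V ℝ) {a b x y : V} (hxy : mnr M x y = 0)
    (hax : mnr M a x ≠ 0) (hby : mnr M b y ≠ 0) : mnr M b x ≠ 0 := by
  have pluecker : mnr M b x * mnr M a y = mnr M b a * mnr M x y + mnr M b y * mnr M a x := by
    simp only [mnr]; ring
  intro hbx
  rw [hbx, hxy, zero_mul, mul_zero, zero_add] at pluecker
  exact mul_ne_zero hby hax pluecker.symm

theorem maxProperSub_insert {B : Set (Finset V)} {I : Finset V} (hB : IsPositroid B)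
    (hI : I ∉ B) : MaxProperSub B (insert I B) :=
  ⟨hB, Set.ssubset_insert hI, fun _ _ hlt hle =>
    ((Set.wcovBy_insert I B).eq_or_eq hle hlt.le).resolve_right hlt.ne⟩

def commonB : Finset (Finset V) :=
  {{0, 1}, {0, 2}, {0, 3}, {0, 5}, {1, 2}, {1, 3}, {1, 5}, {2, 5}, {3, 5}}

def bV1 : Finset (Finset V) := commonB ∪ {{0, 4}, {1, 4}, {2, 4}, {3, 4}}

def bE5 : Finset (Finset V) := insert {2, 3} commonB

theorem BdV1_eq : BdV1 = commonB :=
  BofFam_eq_coe (by decide) ![![1, 2, 0, 0, 0, 4], ![1, 1, 1, 1, 0, 0]] rfl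
    (by
      intro a b hab hI
      fin_cases a <;> fin_cases b <;> simp_all +decide [mnr, Cmat, supp]
      all_goals norm_num)
    (by
      intro c hc a b hab hI
      fin_cases a <;> fin_cases b <;> simp_all +decide [mnr, Cmat, supp])

theorem BdE5L_eq : BdE5L = commonB :=
  BofFam_eq_coe (by decide) ![![1, 1, 1, 2, 0, 0], ![1, 0, 2, 4, 0, 1]] (by simp; norm_num)
    (by
      intro a b hab hI
      fin_cases a <;> fin_cases b <;> simp_all +decide [mnr, Cmat, supp]
      all_goals norm_num)
    (by
      intro c hc a b hab hI
      fin_cases a <;> fin_cases b <;> simp_all +decide [mnr, Cmat, supp]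
      all_goals linarith)

theorem BdE5R_eq : BdE5R = commonB :=
  BofFam_eq_coe (by decide) ![![1, 2, 0, 0, 0, 4], ![1, 0, 1, 1, 0, 3]] rfl
    (by
      intro a b hab hI
      fin_cases a <;> fin_cases b <;> simp_all +decide [mnr, Cmat, supp]
      all_goals norm_num)
    (by
      intro c hc a b hab hI
      fin_cases a <;> fin_cases b <;> simp_all +decide [mnr, Cmat, supp])

theorem BW_V1_eq : BW V1 = bV1 := by
  rw [V1, BW_pair (by decide)]
  exact BofFam_eq_coe (by decide) ![![1, 2, 4, 8, 0, 0], ![1, 1, 0, 0, 1, 1]] trivial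
    (by
      intro a b hab hI
      fin_cases a <;> fin_cases b <;> simp_all +decide [mnr, Cmat, supp]
      all_goals norm_num)
    (by
      intro c _ a b hab hI
      fin_cases a <;> fin_cases b <;> simp_all +decide [mnr, Cmat, supp])

theorem BW_E5L_eq : BW E5L = bE5 := by
  rw [E5L, BW_pair (by decide)]
  exact BofFam_eq_coe (by decide) ![![1, 1, 1, 1, 0, 0], ![1, 0, 2, 3, 0, 1]] trivial
    (by
      intro a b hab hI
      fin_cases a <;> fin_cases b <;> simp_all +decide [mnr, Cmat, supp]
      all_goals norm_num)
    (by
      intro c _ a b hab hI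
      fin_cases a <;> fin_cases b <;> simp_all +decide [mnr, Cmat, supp])

theorem BW_E5R_eq : BW E5R = bE5 := by
  rw [E5R, BW_pair (by decide)]
  exact BofFam_eq_coe (by decide) ![![1, 2, 3, 0, 0, 5], ![1, 0, 1, 2, 0, 1]] trivial
    (by
      intro a b hab hI
      fin_cases a <;> fin_cases b <;> simp_all +decide [mnr, Cmat, supp]
      all_goals norm_num)
    (by
      intro c _ a b hab hI
      fin_cases a <;> fin_cases b <;> simp_all +decide [mnr, Cmat, supp])

theorem isPositroid_commonB : IsPositroid commonB := by
  let M : Matrix (Fin 2) V ℝ := !![1, 1, 1, 1, 0, 0; 0, 1, 2, 2, 0, 1]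
  refine ⟨Finset.coe_nonempty.mpr (by decide), by simp only [Finset.mem_coe]; decide, M,
    rank_eq_two_of_mnr_ne_zero (a := 0) (b := 1) (by norm_num [M, mnr]), ?_, ?_⟩
  · intro a b hab
    fin_cases a <;> fin_cases b <;> simp_all +decide [M, mnr]
  · intro a b hab
    fin_cases a <;> fin_cases b <;> simp_all +decide [M, mnr]
    all_goals norm_num

theorem mem_bV1 {I : Finset V} : I ∈ bV1 ↔ I ∈ commonB ∨ ∃ a : V, a < 4 ∧ I = {a, 4} := by
  revert I; decide

theorem maxProperSub_bV1 : MaxProperSub commonB bV1 := by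
  refine ⟨isPositroid_commonB, Finset.coe_ssubset.mpr (by decide), fun B' hB' hlt hle => ?_⟩
  obtain ⟨-, -, M, -, -, hM⟩ := hB'
  have h45 : mnr M 4 5 = 0 := by
    by_contra h
    exact (by decide : ({4, 5} : Finset V) ∉ bV1) (hlt.1 ((hM 4 5 (by decide)).mp h))
  have h5 : ∀ b : V, b < 4 → mnr M b 5 ≠ 0 := by
    have : ∀ b : V, b < 4 → {b, 5} ∈ commonB := by decide
    exact fun b hb => (hM b 5 (hb.trans (by decide))).mpr (hle (this b hb))
  refine (hle.antisymm fun I hI => ?_).symm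
  rcases mem_bV1.mp (hlt.1 hI) with h | ⟨a, ha, rfl⟩
  · exact h
  · refine absurd (fun J hJ => ?_) hlt.2
    rcases mem_bV1.mp hJ with h | ⟨b, hb, rfl⟩
    · exact hle h
    · exact (hM b 4 hb).mp (mnr_ne_zero_of_pluecker M h45 ((hM a 4 ha).mpr hI) (h5 b hb))

end WLD

open WLD in
/-- The three boundary positroids coincide; the common positroid is contained in `B(V₁)`
and in `B(E_{5,L}) = B(E_{5,R})`, and is maximal among positroids properly contained in
each.  Hence `Σ(V₁)` and `Σ(E₅)` share a codimension-one boundary cell. -/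
theorem statement14 :
    BdV1 = BdE5L ∧ BdE5L = BdE5R ∧
    BW E5L = BW E5R ∧
    BdV1 ⊆ BW V1 ∧ BdV1 ⊆ BW E5L ∧
    MaxProperSub BdV1 (BW V1) ∧ MaxProperSub BdV1 (BW E5L) := by
  rw [BdV1_eq, BdE5L_eq, BdE5R_eq, BW_V1_eq, BW_E5L_eq, BW_E5R_eq]
  have hE5 : MaxProperSub commonB bE5 := by
    rw [bE5, Finset.coe_insert]
    exact maxProperSub_insert isPositroid_commonB (by decide)
  exact ⟨rfl, rfl, rfl, maxProperSub_bV1.2.1.1, hE5.2.1.1, maxProperSub_bV1, hE5⟩
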